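/- Let S be an LR tableau in LR^{λ'}_{δ'μ'} (companion form) with first-row entries s_1 ≤ ⋯ ≤ s_p where p = μ'_1, λ ∈ 𝒫_n, δ ∈ 𝒫^{(2)}_n. Then δ^rev_i < s_i for all 1 ≤ i ≤ p; consequently the sequence m_1 < ⋯ < m_p of Definition 'bounded orthogonal LR' is well defined and satisfies i ≤ m_i ≤ 2i - 1 for 1 ≤ i ≤ p (in the case n - 2μ'_1 ≥ 0). -/

import Mathlib

namespace LRPaper

/-- A partition, encoded as a weakly decreasing list of positive integers. -/
def IsPartition (l : List ℕ) : Prop := l.Pairwise (· ≥ ·) ∧ ∀ x ∈ l, 0 < x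

/-- The conjugate (transposed) partition, as a list. -/
def conj (l : List ℕ) : List ℕ :=
  (List.range l.headI).map fun i => l.countP fun x => decide (i < x)

/-- The entry of a skew tableau `T` (list of rows, row `i` having the cells
`mu_i ≤ j < lam_i`) in row `i` and (absolute) column `j`. -/
def entry (mu : List ℕ) (T : List (List ℕ)) (i j : ℕ) : ℕ :=
  (T.getD i []).getD (j - mu.getD i 0) 0

/-- `T` is a semistandard tableau of skew shape `lam/mu` (entries are positive
integers, rows weakly increase, columns strictly increase). -/
def IsSkewSSYT (lam mu : List ℕ) (T : List (List ℕ)) : Prop :=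
  T.length = lam.length ∧
  (∀ i, (T.getD i []).length = lam.getD i 0 - mu.getD i 0) ∧
  (∀ r ∈ T, ∀ x ∈ r, 0 < x) ∧
  (∀ r ∈ T, r.Pairwise (· ≤ ·)) ∧
  (∀ i j, mu.getD i 0 ≤ j → mu.getD (i+1) 0 ≤ j → j < lam.getD (i+1) 0 →
    entry mu T i j < entry mu T (i+1) j)

/-- The number of occurrences of `k` among the entries of `T`. -/
def content (T : List (List ℕ)) (k : ℕ) : ℕ := T.flatten.count k

/-- `T` has content `nu` : the letter `k+1` occurs `nu_{k+1}` times. -/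
def HasContent (nu : List ℕ) (T : List (List ℕ)) : Prop :=
  ∀ k, content T (k+1) = nu.getD k 0

/-- The reverse reading word: each row right-to-left, rows top-to-bottom. -/
def rwordRev (T : List (List ℕ)) : List ℕ := (T.map List.reverse).flatten

/-- The column reading word `w(T)` : columns right-to-left, and from top to
bottom within each column. -/
def colWord (lam mu : List ℕ) (T : List (List ℕ)) : List ℕ :=
  ((List.range lam.headI).reverse.map fun c =>
    (List.range T.length).filterMap fun i =>
      if mu.getD i 0 ≤ c ∧ c < lam.getD i 0 then some (entry mu T i c) else none).flatten

/-- A lattice word: in every prefix, `i` occurs at least as often as `i+1`. -/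
def IsLattice (w : List ℕ) : Prop :=
  ∀ k i, (w.take k).count (i+2) ≤ (w.take k).count (i+1)

/-- An anti-lattice word (for letters bounded by `ℓ`): in every suffix, `i`
occurs at least as often as `i-1`, for `1 < i ≤ ℓ`. -/
def IsAntiLattice (w : List ℕ) (ℓ : ℕ) : Prop :=
  ∀ k i, i + 2 ≤ ℓ → (w.drop k).count (i+1) ≤ (w.drop k).count (i+2)

/-- A Littlewood–Richardson tableau of shape `lam/mu` and content `nu`. -/
def IsLR (lam mu nu : List ℕ) (T : List (List ℕ)) : Prop :=
  IsSkewSSYT lam mu T ∧ HasContent nu T ∧ IsLattice (rwordRev T)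

/-- A Littlewood–Richardson tableau of shape `lam/mu` with content `nu^π`
(the 180° rotation of `nu`): the column reading word is an anti-lattice word
and the letter `i` occurs `nu_{ℓ(nu)+1-i}` times. -/
def IsAntiLR (lam mu nu : List ℕ) (T : List (List ℕ)) : Prop :=
  IsSkewSSYT lam mu T ∧ HasContent nu.reverse T ∧
    IsAntiLattice (colWord lam mu T) nu.length

/-- Column insertion of `x` into a single column (top-to-bottom list): `x`
replaces the topmost entry `≥ x` (which is bumped to the next column), or is
appended at the bottom. -/
def colInsertCol (x : ℕ) : List ℕ → List ℕ × Option ℕ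
  | [] => ([x], none)
  | y :: ys =>
    if x ≤ y then (x :: ys, some y)
    else
      let p := colInsertCol x ys
      (y :: p.1, p.2)

/-- Column insertion of a letter into a tableau presented as its list of
columns (left to right). -/
def colInsert (x : ℕ) : List (List ℕ) → List (List ℕ)
  | [] => [[x]]
  | C :: rest =>
    match colInsertCol x C with
    | (C', none) => C' :: rest
    | (C', some y) => C' :: colInsert y rest

/-- Column insertion of a word (left to right) into a tableau given by its
columns. -/
def insertWord (w : List ℕ) (C : List (List ℕ)) : List (List ℕ) :=
  w.foldl (fun acc x => colInsert x acc) C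

/-- The columns of the superstandard tableau `H_mu` of shape `mu`: the `i`-th
entry from the top of each column is `i`. -/
def Hcols (mu : List ℕ) : List (List ℕ) :=
  (List.range mu.headI).map fun c => (List.range ((conj mu).getD c 0)).map (· + 1)

/-- The outer shape of the rotated diagram `mu^π` (a rectangle of width `mu_1`). -/
def piOuter (mu : List ℕ) : List ℕ := List.replicate mu.length mu.headI

/-- The inner shape of the rotated diagram `mu^π`. -/
def piInner (mu : List ℕ) : List ℕ :=
  (List.range mu.length).map fun i => mu.headI - mu.getD (mu.length - 1 - i) 0

/-- `S` is (the companion tableau of) an LR tableau in `LR^{lam'}_{delta' mu'}`: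
a semistandard tableau of straight shape `mu'` whose column insertion into
`H_{delta'}` yields `H_{lam'}`. -/
def IsCompanion (lam delta mu : List ℕ) (S : List (List ℕ)) : Prop :=
  IsSkewSSYT (conj mu) [] S ∧
    insertWord (colWord (conj mu) [] S) (Hcols (conj delta)) = Hcols (conj lam)

/-- `U` is (the companion tableau of) an LR tableau in `LR^{lam}_{delta mu^π}`:
a semistandard tableau of shape `mu^π` whose column insertion into `H_delta`
yields `H_lam`. -/
def IsCompanionAnti (lam delta mu : List ℕ) (U : List (List ℕ)) : Prop :=
  IsSkewSSYT (piOuter mu) (piInner mu) U ∧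
    insertWord (colWord (piOuter mu) (piInner mu) U) (Hcols delta) = Hcols lam


open scoped Classical

/-- `δ^{rev}`: the partition `δ`, padded with zeros to length `n`, read in
reverse. -/
def drev (n : ℕ) (delta : List ℕ) : List ℕ :=
  (delta ++ List.replicate (n - delta.length) 0).reverse

/-- The sequence of Definition 4.1, built downwards from `i = p = μ'_1`:
`m_i` is the largest index `k` with `i ≤ k ≤ ub(i)`, `k` not already chosen
among `m_{i+1}, …, m_p`, and `δ^{rev}_k < s_i`, where `s_i` is the `i`-th
entry of the first row of `S` and `ub(i) = 2i - 1` for `i ≤ r` and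
`n - p + i` for `i > r` (with `r = μ'_1` if `n - 2μ'_1 ≥ 0` and
`r = n - μ'_1` otherwise, i.e. `r = min(p, n-p)`).
`mChosen n mu delta S j = [m_{p-j+1}, …, m_p]`. -/
def mChosen (n : ℕ) (mu delta : List ℕ) (S : List (List ℕ)) : ℕ → List ℕ
  | 0 => []
  | j + 1 =>
    let p := mu.length
    let i := p - j
    let prev := mChosen n mu delta S j
    let ub := if i ≤ min p (n - p) then 2 * i - 1 else n - p + i
    Nat.findGreatest
      (fun k => i ≤ k ∧ k ∉ prev ∧
        (drev n delta).getD (k - 1) 0 < (S.getD 0 []).getD (i - 1) 0) ub :: prev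

/-- `m_i` of Definition 4.1, for `1 ≤ i ≤ p = μ'_1`. -/
def mOv (n : ℕ) (mu delta : List ℕ) (S : List (List ℕ)) (i : ℕ) : ℕ :=
  (mChosen n mu delta S (mu.length + 1 - i)).headI

/-- `n_j` of Definition 4.1: the `j`-th smallest element of
`{j+1, …, n} \ {m_{j+1}, …, m_p}`. -/
noncomputable def nOv (n : ℕ) (mu delta : List ℕ) (S : List (List ℕ)) (j : ℕ) : ℕ :=
  (((Finset.Icc (j + 1) n).filter fun k =>
      ∀ i ∈ Finset.Icc (j + 1) mu.length, mOv n mu delta S i ≠ k).sort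
    (· ≤ ·)).getD (j - 1) 0

/-- `S ∈ overline{LR}^{λ'}_{δ'μ'}` (Definition 4.1): a companion LR tableau
of shape `μ'` (so `(S → H_{δ'}) = H_{λ'}`) whose second-row entries
`t_1 ≤ ⋯ ≤ t_q` (`q = μ'_2`) satisfy `t_j > δ^{rev}_{n_j}`. -/
def InOvLR (n : ℕ) (lam delta mu : List ℕ) (S : List (List ℕ)) : Prop :=
  IsCompanion lam delta mu S ∧
  ∀ j, 1 ≤ j → j ≤ (conj mu).getD 1 0 →
    (drev n delta).getD (nOv n mu delta S j - 1) 0 <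
      (S.getD 1 []).getD (j - 1) 0

/-- `σ_i`: the `i`-th entry from the bottom of the rightmost column of a
tableau `U` of shape `μ^π`. -/
def sigmaEnt (mu : List ℕ) (U : List (List ℕ)) (i : ℕ) : ℕ :=
  entry (piInner mu) U (mu.length - i) (mu.headI - 1)

/-- `τ_j`: the `j`-th entry from the bottom of the second rightmost column of
a tableau `U` of shape `μ^π`. -/
def tauEnt (mu : List ℕ) (U : List (List ℕ)) (j : ℕ) : ℕ :=
  entry (piInner mu) U (mu.length - j) (mu.headI - 2)

/-- `m_i` of Definition 4.5: `min(n - σ_i + 1, 2i - 1)` for `i ≤ r` and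
`min(n - σ_i + 1, n - p + i)` for `i > r` (`r = min(p, n - p)`). -/
def mUnd (n : ℕ) (mu : List ℕ) (U : List (List ℕ)) (i : ℕ) : ℕ :=
  if i ≤ min mu.length (n - mu.length) then
    min (n - sigmaEnt mu U i + 1) (2 * i - 1)
  else
    min (n - sigmaEnt mu U i + 1) (n - mu.length + i)

/-- `n_j` of Definition 4.5: the `j`-th smallest element of
`{j+1, …, n} \ {m_{j+1}, …, m_p}`. -/
noncomputable def nUnd (n : ℕ) (mu : List ℕ) (U : List (List ℕ)) (j : ℕ) : ℕ :=
  (((Finset.Icc (j + 1) n).filter fun k =>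
      ∀ i ∈ Finset.Icc (j + 1) mu.length, mUnd n mu U i ≠ k).sort
    (· ≤ ·)).getD (j - 1) 0

/-- `U ∈ underline{LR}^{λ}_{δμ}` (Definition 4.5): a companion tableau of
shape `μ^π` (so `(U → H_δ) = H_λ`) satisfying the flag condition
`τ_j + n_j ≤ n + 1` for `1 ≤ j ≤ q = μ'_2`. -/
def InUndLR (n : ℕ) (lam delta mu : List ℕ) (U : List (List ℕ)) : Prop :=
  IsCompanionAnti lam delta mu U ∧
  ∀ j, 1 ≤ j → j ≤ (conj mu).getD 1 0 →
    tauEnt mu U j + nUnd n mu U j ≤ n + 1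


/-!
Call a tableau superstandard when each of its columns is an initial segment `1, 2, …, ℓ`.
Column insertion bumps a letter `x` unchanged through the columns of such a tableau that have
length `≥ x` and places it at the bottom of the first shorter one. The defect of a tableau, the
number of cells below the initial segment of their column, never decreases under insertion into
tableaux with strictly increasing columns whose initial segments shorten from left to right. As
the insertion of the column word of `S` into `H_{δ'}` ends at `H_{λ'}`, of defect `0`, every
intermediate tableau is superstandard.

The column word of `S` ends with its columns `i, i - 1, …, 1`, which begin with
`s_i ≥ ⋯ ≥ s_1`. Inserting the column headed by `s_k` raises the number of columns of length
`≥ s_k` by one, and as `s_k` decreases with `k` these gains accumulate: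
`ℓ(λ) ≥ #{c : δ_c ≥ s_i} + i`. If `δ^{rev}_i = δ_{n+1-i} ≥ s_i`, then
`δ_1, …, δ_{n+1-i}` are all `≥ s_i` and `ℓ(λ) > n`. Once `δ^{rev}_i < s_i` is known, `i` itself
is a candidate in the search for `m_i` (the previously chosen `m_j` exceed `i`), and the search
bound is `2i - 1` because `2μ'_1 ≤ n`.
-/

def stdRun : ℕ → List ℕ → ℕ
  | k, [] => k
  | k, y :: ys => if y = k + 1 then stdRun (k + 1) ys else k

section Column

variable {k x : ℕ} {C : List ℕ}

lemma le_stdRun (k : ℕ) (C : List ℕ) : k ≤ stdRun k C := by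
  induction C generalizing k with
  | nil => exact le_rfl
  | cons y ys ih =>
    unfold stdRun; split
    · exact (ih (k + 1)).trans' (Nat.le_succ k)
    · exact le_rfl

lemma stdRun_le (k : ℕ) (C : List ℕ) : stdRun k C ≤ k + C.length := by
  induction C generalizing k with
  | nil => simp [stdRun]
  | cons y ys ih =>
    unfold stdRun; split
    · have := ih (k + 1); simp only [List.length_cons]; omega
    · simp

lemma stdRun_range'_append (k t : ℕ) (rest : List ℕ) :
    stdRun k (List.range' (k + 1) t ++ rest) = stdRun (k + t) rest := by
  induction t generalizing k with
  | zero => rfl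
  | succ t ih =>
    rw [List.range'_succ, List.cons_append, stdRun, if_pos rfl, ih]
    congr 1
    omega

lemma stdRun_range' (k t : ℕ) : stdRun k (List.range' (k + 1) t) = k + t := by
  simpa [stdRun] using stdRun_range'_append k t []

lemma eq_range'_of_stdRun_eq (h : stdRun k C = k + C.length) :
    C = List.range' (k + 1) C.length := by
  induction C generalizing k with
  | nil => rfl
  | cons y ys ih =>
    unfold stdRun at h
    split at h
    · rw [List.length_cons, List.range'_succ, ‹y = k + 1›]
      exact congrArg _ (ih (k := k + 1) (by simp only [List.length_cons] at h; omega))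
    · simp at h

lemma stdRun_zero_eq_length_iff : stdRun 0 C = C.length ↔ C = List.range' 1 C.length := by
  refine ⟨fun h => eq_range'_of_stdRun_eq (by omega), fun h => ?_⟩
  rw [h, stdRun_range', List.length_range', Nat.zero_add]

lemma stdRun_add_one_not_mem (hP : C.Pairwise (· < ·)) (hbd : ∀ z ∈ C, k < z) :
    stdRun k C + 1 ∉ C := by
  induction C generalizing k with
  | nil => simp
  | cons y ys ih =>
    have hbd' : ∀ z ∈ ys, y < z := (List.pairwise_cons.1 hP).1
    unfold stdRun
    split
    · rintro (h | ⟨_, h⟩)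
      · have := le_stdRun (k + 1) ys; omega
      · exact ih hP.of_cons (fun z hz => ‹y = k + 1› ▸ hbd' z hz) h
    · have := hbd y List.mem_cons_self
      rintro (h | ⟨_, h⟩)
      · omega
      · have := hbd' _ h; omega

lemma mem_colInsertCol_fst {z : ℕ} (hz : z ∈ (colInsertCol x C).1) : z ∈ C ∨ z = x := by
  induction C with
  | nil => simpa [colInsertCol] using hz
  | cons y ys ih =>
    unfold colInsertCol at hz
    split at hz
    · rcases List.mem_cons.1 hz with h | h
      · exact .inr h
      · exact .inl (List.mem_cons_of_mem _ h)
    · rcases List.mem_cons.1 hz with h | h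
      · exact .inl (h ▸ List.mem_cons_self)
      · exact (ih h).imp_left (List.mem_cons_of_mem _)

lemma colInsertCol_of_snd_eq_some {y : ℕ} (h : (colInsertCol x C).2 = some y) :
    x ≤ y ∧ y ∈ C ∧ (colInsertCol x C).1.length = C.length := by
  induction C with
  | nil => simp [colInsertCol] at h
  | cons c cs ih =>
    unfold colInsertCol at h ⊢
    by_cases hxc : x ≤ c
    · rw [if_pos hxc] at h ⊢
      cases h
      exact ⟨hxc, List.mem_cons_self, rfl⟩
    · rw [if_neg hxc] at h ⊢
      obtain ⟨h1, h2, h3⟩ := ih h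
      exact ⟨h1, List.mem_cons_of_mem _ h2, by simpa using h3⟩

lemma colInsertCol_fst_of_snd_eq_none (h : (colInsertCol x C).2 = none) :
    (colInsertCol x C).1 = C ++ [x] := by
  induction C with
  | nil => rfl
  | cons c cs ih =>
    unfold colInsertCol at h ⊢
    by_cases hxc : x ≤ c
    · rw [if_pos hxc] at h
      simp at h
    · rw [if_neg hxc] at h ⊢
      simp only [List.cons_append, List.cons.injEq, true_and]
      exact ih h

lemma colInsertCol_of_forall_lt (h : ∀ z ∈ C, z < x) : colInsertCol x C = (C ++ [x], none) := by
  induction C with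
  | nil => rfl
  | cons c cs ih =>
    have hcx : ¬ x ≤ c := by have := h c List.mem_cons_self; omega
    rw [colInsertCol, if_neg hcx, ih fun z hz => h z (List.mem_cons_of_mem _ hz)]
    rfl

lemma pairwise_colInsertCol (hP : C.Pairwise (· < ·)) :
    (colInsertCol x C).1.Pairwise (· < ·) := by
  induction C with
  | nil => simp [colInsertCol]
  | cons y ys ih =>
    obtain ⟨hy, hys⟩ := List.pairwise_cons.1 hP
    unfold colInsertCol
    split
    · exact List.pairwise_cons.2 ⟨fun z hz => (hy z hz).trans_le' ‹x ≤ y›, hys⟩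
    · refine List.pairwise_cons.2 ⟨fun z hz => ?_, ih hys⟩
      rcases mem_colInsertCol_fst hz with h | h
      · exact hy z h
      · omega

lemma colInsertCol_of_le_stdRun (hP : C.Pairwise (· < ·)) (hbd : ∀ z ∈ C, k < z)
    (hx : k < x) (hle : x ≤ stdRun k C) : colInsertCol x C = (C, some x) := by
  induction C generalizing k with
  | nil => exact absurd hle (by change ¬ x ≤ k; omega)
  | cons y ys ih =>
    have hy := hbd y List.mem_cons_self
    unfold stdRun at hle
    split at hle
    · rw [colInsertCol]
      split
      · rw [show x = y by omega]
      · have hbd' : ∀ z ∈ ys, k + 1 < z := fun z hz => by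
          have := (List.pairwise_cons.1 hP).1 z hz; omega
        rw [ih hP.of_cons hbd' (by omega) hle]
    · omega

lemma stdRun_colInsertCol (hP : C.Pairwise (· < ·)) (hbd : ∀ z ∈ C, k < z) (hx : k < x) :
    stdRun k (colInsertCol x C).1 = if x = stdRun k C + 1 then x else stdRun k C := by
  by_cases hle : x ≤ stdRun k C
  · rw [colInsertCol_of_le_stdRun hP hbd hx hle, if_neg (by omega)]
  induction C generalizing k with
  | nil =>
    change stdRun k [x] = if x = k + 1 then x else k
    simp only [stdRun]
    split_ifs <;> omega
  | cons y ys ih =>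
    have hy := hbd y List.mem_cons_self
    have hbd' : ∀ z ∈ ys, y < z := (List.pairwise_cons.1 hP).1
    by_cases hyk : y = k + 1
    · simp only [stdRun, if_pos hyk] at hle ⊢
      have hxy : ¬ x ≤ y := by have := le_stdRun (k + 1) ys; omega
      simp only [colInsertCol, if_neg hxy, stdRun, if_pos hyk]
      exact ih hP.of_cons (fun z hz => hyk ▸ hbd' z hz) (by omega) hle
    · simp only [stdRun, if_neg hyk] at hle ⊢
      unfold colInsertCol
      split
      · simp only [stdRun]
        split
        · subst x
          cases ys with
          | nil => simp [stdRun]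
          | cons a as =>
            have := hbd' a List.mem_cons_self
            simp only [stdRun, if_neg (show a ≠ k + 1 + 1 by omega)]
        · rfl
      · simp only [stdRun, if_neg hyk, if_neg (show x ≠ k + 1 by omega)]

lemma add_two_le_of_colInsertCol_snd (hP : C.Pairwise (· < ·)) (hbd : ∀ z ∈ C, k < z)
    (hlt : stdRun k C < x) {y : ℕ} (h : (colInsertCol x C).2 = some y) :
    stdRun k C + 2 ≤ y := by
  obtain ⟨hxy, hyC, -⟩ := colInsertCol_of_snd_eq_some h
  have : y ≠ stdRun k C + 1 := fun he => stdRun_add_one_not_mem hP hbd (he ▸ hyC)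
  omega

lemma colInsertCol_snd_le_or (hP : C.Pairwise (· < ·)) (hbd : ∀ z ∈ C, k < z) (hx : k < x)
    {y : ℕ} (h : (colInsertCol x C).2 = some y) : y ≤ stdRun k C ∨ stdRun k C + 2 ≤ y := by
  by_cases hle : x ≤ stdRun k C
  · rw [colInsertCol_of_le_stdRun hP hbd hx hle] at h
    cases h
    exact .inl hle
  · exact .inr (add_two_le_of_colInsertCol_snd hP hbd (by omega) h)

end Column

section Tableau

def IsStrictColumns (T : List (List ℕ)) : Prop :=
  ∀ C ∈ T, C.Pairwise (· < ·) ∧ ∀ z ∈ C, 0 < z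

def StdRunAntitone (T : List (List ℕ)) : Prop :=
  (T.map (stdRun 0)).IsChain (· ≥ ·)

def IsSuperstandard (T : List (List ℕ)) : Prop :=
  ∀ C ∈ T, C = List.range' 1 C.length

variable {x : ℕ} {C : List ℕ} {T : List (List ℕ)}

lemma colInsert_cons_of_snd_eq_none (rest : List (List ℕ)) (h : (colInsertCol x C).2 = none) :
    colInsert x (C :: rest) = (colInsertCol x C).1 :: rest := by
  have he : colInsertCol x C = ((colInsertCol x C).1, none) := by rw [← h]
  rw [colInsert, he]

lemma colInsert_cons_of_snd_eq_some (rest : List (List ℕ)) {y : ℕ}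
    (h : (colInsertCol x C).2 = some y) :
    colInsert x (C :: rest) = (colInsertCol x C).1 :: colInsert y rest := by
  have he : colInsertCol x C = ((colInsertCol x C).1, some y) := by rw [← h]
  rw [colInsert, he]

lemma headI_colInsert : (colInsert x T).headI = (colInsertCol x T.headI).1 := by
  cases T with
  | nil => rfl
  | cons C rest =>
    cases h : (colInsertCol x C).2 with
    | none => rw [colInsert_cons_of_snd_eq_none rest h]; rfl
    | some y => rw [colInsert_cons_of_snd_eq_some rest h]; rfl

lemma stdRunAntitone_cons :
    StdRunAntitone (C :: T) ↔ stdRun 0 T.headI ≤ stdRun 0 C ∧ StdRunAntitone T := by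
  unfold StdRunAntitone
  rw [List.map_cons, List.isChain_cons]
  cases T with
  | nil => exact iff_of_true (by simp) ⟨Nat.zero_le _, by simp⟩
  | cons D T => simp

lemma IsSuperstandard.isStrictColumns (h : IsSuperstandard T) : IsStrictColumns T := by
  intro C hC
  rw [h C hC]
  exact ⟨List.pairwise_lt_range', fun z hz => (List.mem_range'_1.1 hz).1⟩

lemma IsStrictColumns.colInsert (hT : IsStrictColumns T) (hx : 0 < x) :
    IsStrictColumns (colInsert x T) := by
  induction T generalizing x with
  | nil =>
    intro C hC
    simp only [colInsert, List.mem_singleton] at hC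
    subst hC
    simpa using hx
  | cons C rest ih =>
    obtain ⟨hP, hpos⟩ := hT C List.mem_cons_self
    have hrest : IsStrictColumns rest := fun D hD => hT D (List.mem_cons_of_mem _ hD)
    have hC' : (colInsertCol x C).1.Pairwise (· < ·) ∧ ∀ z ∈ (colInsertCol x C).1, 0 < z :=
      ⟨pairwise_colInsertCol hP, fun z hz => (mem_colInsertCol_fst hz).elim (hpos z) (· ▸ hx)⟩
    cases h : (colInsertCol x C).2 with
    | none =>
      rw [colInsert_cons_of_snd_eq_none rest h]
      exact List.forall_mem_cons.2 ⟨hC', hrest⟩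
    | some y =>
      rw [colInsert_cons_of_snd_eq_some rest h]
      exact List.forall_mem_cons.2
        ⟨hC', ih hrest (hx.trans_le (colInsertCol_of_snd_eq_some h).1)⟩

lemma stdRun_headI_colInsert (hT : IsStrictColumns T) (hx : 0 < x) :
    stdRun 0 (colInsert x T).headI =
      if x = stdRun 0 T.headI + 1 then x else stdRun 0 T.headI := by
  cases T with
  | nil =>
    change stdRun 0 [x] = if x = 0 + 1 then x else 0
    simp only [stdRun]
    split_ifs <;> omega
  | cons C rest =>
    rw [headI_colInsert]
    exact stdRun_colInsertCol (hT C List.mem_cons_self).1 (hT C List.mem_cons_self).2 hx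

lemma StdRunAntitone.colInsert (hT : IsStrictColumns T) (hc : StdRunAntitone T) (hx : 0 < x) :
    StdRunAntitone (colInsert x T) := by
  induction T generalizing x with
  | nil => simp [StdRunAntitone, LRPaper.colInsert]
  | cons C rest ih =>
    obtain ⟨hP, hpos⟩ := hT C List.mem_cons_self
    have hrest : IsStrictColumns rest := fun D hD => hT D (List.mem_cons_of_mem _ hD)
    obtain ⟨hba, hcrest⟩ := stdRunAntitone_cons.1 hc
    have hrun := stdRun_colInsertCol hP hpos hx
    cases h : (colInsertCol x C).2 with
    | none =>
      rw [colInsert_cons_of_snd_eq_none rest h]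
      refine stdRunAntitone_cons.2 ⟨?_, hcrest⟩
      rw [hrun]
      split_ifs <;> omega
    | some y =>
      have hxy := (colInsertCol_of_snd_eq_some h).1
      have hy := colInsertCol_snd_le_or hP hpos hx h
      rw [colInsert_cons_of_snd_eq_some rest h]
      refine stdRunAntitone_cons.2 ⟨?_, ih hrest hcrest (by omega)⟩
      rw [hrun, stdRun_headI_colInsert hrest (by omega)]
      split_ifs <;> omega

/-- A bumped letter never extends the run of a later column. -/
lemma sum_stdRun_colInsert_le (hT : IsStrictColumns T) (hc : StdRunAntitone T) (hx : 0 < x) :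
    ((colInsert x T).map (stdRun 0)).sum ≤ (T.map (stdRun 0)).sum + 1 ∧
      (stdRun 0 T.headI + 2 ≤ x →
        ((colInsert x T).map (stdRun 0)).sum ≤ (T.map (stdRun 0)).sum) := by
  induction T generalizing x with
  | nil =>
    change stdRun 0 [x] + 0 ≤ 0 + 1 ∧ (0 + 2 ≤ x → stdRun 0 [x] + 0 ≤ 0)
    simp only [stdRun]
    split_ifs <;> omega
  | cons C rest ih =>
    obtain ⟨hP, hpos⟩ := hT C List.mem_cons_self
    have hrest : IsStrictColumns rest := fun D hD => hT D (List.mem_cons_of_mem _ hD)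
    obtain ⟨hba, hcrest⟩ := stdRunAntitone_cons.1 hc
    have hrun := stdRun_colInsertCol hP hpos hx
    simp only [List.map_cons, List.sum_cons, List.headI_cons]
    cases h : (colInsertCol x C).2 with
    | none =>
      rw [colInsert_cons_of_snd_eq_none rest h, List.map_cons, List.sum_cons, hrun]
      split_ifs <;> omega
    | some y =>
      have hxy := (colInsertCol_of_snd_eq_some h).1
      have hy := colInsertCol_snd_le_or hP hpos hx h
      have ihy := ih hrest hcrest (x := y) (by omega)
      rw [colInsert_cons_of_snd_eq_some rest h, List.map_cons, List.sum_cons, hrun]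
      split_ifs <;> omega

lemma sum_length_colInsert (x : ℕ) (T : List (List ℕ)) :
    ((colInsert x T).map List.length).sum = (T.map List.length).sum + 1 := by
  induction T generalizing x with
  | nil => rfl
  | cons C rest ih =>
    simp only [List.map_cons, List.sum_cons]
    cases h : (colInsertCol x C).2 with
    | none =>
      rw [colInsert_cons_of_snd_eq_none rest h, colInsertCol_fst_of_snd_eq_none h]
      simp only [List.map_cons, List.sum_cons, List.length_append, List.length_singleton]
      omega
    | some y =>
      rw [colInsert_cons_of_snd_eq_some rest h, List.map_cons, List.sum_cons,
        (colInsertCol_of_snd_eq_some h).2.2, ih]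
      omega

lemma isSuperstandard_iff_sum_length_le :
    IsSuperstandard T ↔ (T.map List.length).sum ≤ (T.map (stdRun 0)).sum := by
  induction T with
  | nil => simp [IsSuperstandard]
  | cons C rest ih =>
    have hC := stdRun_le 0 C
    have hrest : (rest.map (stdRun 0)).sum ≤ (rest.map List.length).sum :=
      List.sum_le_sum fun D _ => by simpa using stdRun_le 0 D
    simp only [IsSuperstandard, List.forall_mem_cons, List.map_cons, List.sum_cons] at ih ⊢
    rw [ih, ← stdRun_zero_eq_length_iff]
    omega

end Tableau

section InsertWord

variable {u v w : List ℕ} {x : ℕ} {T : List (List ℕ)}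

lemma insertWord_cons (x : ℕ) (w : List ℕ) (T : List (List ℕ)) :
    insertWord (x :: w) T = insertWord w (colInsert x T) := rfl

lemma insertWord_append (u v : List ℕ) (T : List (List ℕ)) :
    insertWord (u ++ v) T = insertWord v (insertWord u T) :=
  List.foldl_append

lemma insertWord_invariants (hw : ∀ z ∈ w, 0 < z) (hT : IsStrictColumns T)
    (hc : StdRunAntitone T) :
    IsStrictColumns (insertWord w T) ∧ StdRunAntitone (insertWord w T) := by
  induction w generalizing T with
  | nil => exact ⟨hT, hc⟩
  | cons x w ih =>
    have hx := hw x List.mem_cons_self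
    exact ih (fun z hz => hw z (List.mem_cons_of_mem _ hz)) (hT.colInsert hx)
      (hc.colInsert hT hx)

lemma sum_length_insertWord (w : List ℕ) (T : List (List ℕ)) :
    ((insertWord w T).map List.length).sum = (T.map List.length).sum + w.length := by
  induction w generalizing T with
  | nil => rfl
  | cons x w ih =>
    rw [insertWord_cons, ih, sum_length_colInsert, List.length_cons]
    omega

lemma sum_stdRun_insertWord_le (hw : ∀ z ∈ w, 0 < z) (hT : IsStrictColumns T)
    (hc : StdRunAntitone T) :
    ((insertWord w T).map (stdRun 0)).sum ≤ (T.map (stdRun 0)).sum + w.length := by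
  induction w generalizing T with
  | nil => exact le_rfl
  | cons x w ih =>
    have hx := hw x List.mem_cons_self
    have := ih (fun z hz => hw z (List.mem_cons_of_mem _ hz)) (hT.colInsert hx)
      (hc.colInsert hT hx)
    have := (sum_stdRun_colInsert_le hT hc hx).1
    rw [insertWord_cons, List.length_cons]
    omega

/-- The defect `∑ (length - stdRun 0)` never decreases under insertion. -/
lemma IsSuperstandard.of_insertWord_append (hw : ∀ z ∈ u ++ v, 0 < z) (hT : IsStrictColumns T)
    (hc : StdRunAntitone T) (h : IsSuperstandard (insertWord (u ++ v) T)) :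
    IsSuperstandard (insertWord u T) := by
  obtain ⟨hT', hc'⟩ :=
    insertWord_invariants (fun z hz => hw z (List.mem_append_left _ hz)) hT hc
  have hv := sum_stdRun_insertWord_le (fun z hz => hw z (List.mem_append_right _ hz)) hT' hc'
  rw [insertWord_append, isSuperstandard_iff_sum_length_le, sum_length_insertWord] at h
  rw [isSuperstandard_iff_sum_length_le]
  omega

end InsertWord

section NumColsGe

def numColsGe (T : List (List ℕ)) (u : ℕ) : ℕ := T.countP fun C => u ≤ C.length

variable {u x : ℕ} {T : List (List ℕ)}

lemma numColsGe_le_length : numColsGe T u ≤ T.length := List.countP_le_length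

lemma numColsGe_anti {u' : ℕ} (h : u' ≤ u) : numColsGe T u ≤ numColsGe T u' :=
  List.countP_mono_left fun C _ hC => by simp only [decide_eq_true_eq] at hC ⊢; omega

lemma numColsGe_le_colInsert : numColsGe T u ≤ numColsGe (colInsert x T) u := by
  induction T generalizing x with
  | nil => exact Nat.zero_le _
  | cons C rest ih =>
    cases h : (colInsertCol x C).2 with
    | none =>
      rw [colInsert_cons_of_snd_eq_none rest h, numColsGe, numColsGe, List.countP_cons,
        List.countP_cons, colInsertCol_fst_of_snd_eq_none h, List.length_append]
      simp only [decide_eq_true_eq]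
      split_ifs <;> omega
    | some y =>
      rw [colInsert_cons_of_snd_eq_some rest h, numColsGe, numColsGe, List.countP_cons,
        List.countP_cons, (colInsertCol_of_snd_eq_some h).2.2]
      exact Nat.add_le_add_right ih _

lemma numColsGe_le_insertWord (w : List ℕ) : numColsGe T u ≤ numColsGe (insertWord w T) u := by
  induction w generalizing T with
  | nil => exact le_rfl
  | cons x w ih => exact numColsGe_le_colInsert.trans ih

/-- In a superstandard tableau `x` is bumped unchanged until it is placed below a column of
length `x - 1`. -/
lemma numColsGe_colInsert (hT : IsSuperstandard T) (hT' : IsSuperstandard (colInsert x T))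
    (hx : 0 < x) : numColsGe (colInsert x T) x = numColsGe T x + 1 := by
  induction T with
  | nil =>
    have h1 := hT' [x] List.mem_cons_self
    simp only [List.length_singleton, List.range'_one, List.cons.injEq, and_true] at h1
    subst h1
    rfl
  | cons C rest ih =>
    have hC := hT C List.mem_cons_self
    have hrest : IsSuperstandard rest := fun D hD => hT D (List.mem_cons_of_mem _ hD)
    have hrun : stdRun 0 C = C.length := stdRun_zero_eq_length_iff.2 hC
    obtain ⟨hP, hpos⟩ := hT.isStrictColumns C List.mem_cons_self
    by_cases hle : x ≤ C.length
    · have h := colInsertCol_of_le_stdRun hP hpos hx (hrun ▸ hle)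
      rw [colInsert_cons_of_snd_eq_some rest (by rw [h])] at hT' ⊢
      rw [h] at hT' ⊢
      have := ih hrest fun D hD => hT' D (List.mem_cons_of_mem _ hD)
      simp only [numColsGe, List.countP_cons] at this ⊢
      omega
    · have hlt : ∀ z ∈ C, z < x := fun z hz => by
        rw [hC, List.mem_range'_1] at hz; omega
      have h := colInsertCol_of_forall_lt hlt
      rw [colInsert_cons_of_snd_eq_none rest (by rw [h]), h] at hT' ⊢
      have hx' : x ≤ C.length + 1 := by
        have hmem : x ∈ C ++ [x] := List.mem_append_right _ List.mem_cons_self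
        rw [hT' (C ++ [x]) List.mem_cons_self, List.mem_range'_1, List.length_append] at hmem
        simp only [List.length_singleton] at hmem
        omega
      simp only [numColsGe, List.countP_cons, List.length_append, List.length_singleton,
        decide_eq_true_eq]
      rw [if_pos (by omega), if_neg hle]

end NumColsGe

/-- Each block `y :: t` enters a superstandard tableau, so its first letter `y` adds a column of
length `≥ y`; as the first letters decrease from block to block, these columns accumulate. -/
lemma numColsGe_add_length_le {x : ℕ} {T : List (List ℕ)} (bs : List (List ℕ))
    (hT : IsStrictColumns T) (hc : StdRunAntitone T) (hpos : ∀ z ∈ bs.flatten, 0 < z)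
    (hfull : IsSuperstandard (insertWord bs.flatten T)) (hne : ∀ b ∈ bs, b ≠ [])
    (hsorted : bs.Pairwise fun b b' => b'.headI ≤ b.headI) (hx : ∀ b ∈ bs, b.headI ≤ x) :
    numColsGe T x + bs.length ≤ (insertWord bs.flatten T).length := by
  induction bs generalizing T x with
  | nil => exact numColsGe_le_length
  | cons b bs ih =>
    obtain ⟨y, t, rfl⟩ := List.exists_cons_of_ne_nil (hne b List.mem_cons_self)
    have hword : ((y :: t) :: bs).flatten = [y] ++ (t ++ bs.flatten) := rfl
    rw [hword] at hpos hfull ⊢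
    have hy : 0 < y := hpos y (by simp)
    have hT0 : IsSuperstandard T :=
      IsSuperstandard.of_insertWord_append (u := []) (by simpa using hpos) hT hc hfull
    have hT1 : IsSuperstandard (colInsert y T) :=
      IsSuperstandard.of_insertWord_append hpos hT hc hfull
    rw [← List.append_assoc] at hpos hfull ⊢
    obtain ⟨hT', hc'⟩ := insertWord_invariants (w := [y] ++ t)
      (fun z hz => hpos z (List.mem_append_left _ hz)) hT hc
    rw [insertWord_append] at hfull ⊢
    have ih' := ih (x := y) hT' hc' (fun z hz => hpos z (List.mem_append_right _ hz)) hfull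
      (fun b hb => hne b (List.mem_cons_of_mem _ hb)) hsorted.of_cons
      (List.pairwise_cons.1 hsorted).1
    have h1 := numColsGe_colInsert hT0 hT1 hy
    have h2 : numColsGe T x ≤ numColsGe T y := numColsGe_anti (hx _ List.mem_cons_self)
    have h3 : numColsGe (colInsert y T) y ≤ numColsGe (insertWord ([y] ++ t) T) y :=
      numColsGe_le_insertWord t
    rw [List.length_cons]
    omega

section Partitions

lemma lt_countP_le_iff {l : List ℕ} (hl : l.Pairwise (· ≥ ·)) {c : ℕ} (hc : c < l.length)
    (v : ℕ) : c < l.countP (fun x => v ≤ x) ↔ v ≤ l[c] := by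
  induction l generalizing c with
  | nil => simp at hc
  | cons a l ih =>
    obtain ⟨ha, hl'⟩ := List.pairwise_cons.1 hl
    by_cases hva : v ≤ a
    · rw [List.countP_cons, if_pos (by simpa using hva)]
      cases c with
      | zero => simpa using hva
      | succ c => simpa using ih hl' (by simpa using hc)
    · have h0 : l.countP (fun x => v ≤ x) = 0 :=
        List.countP_eq_zero.2 fun b hb => by
          have := ha b hb
          simp only [decide_eq_true_eq]
          omega
      rw [List.countP_cons, h0, if_neg (by simpa using hva)]
      cases c with
      | zero => simpa using hva
      | succ c =>
        have := ha _ (List.getElem_mem (l := l) (by simpa using hc))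
        simp only [List.getElem_cons_succ]
        omega

lemma countP_range_lt (D H : ℕ) : (List.range H).countP (fun i => i < D) = min D H := by
  induction H with
  | zero => simp
  | succ m ih =>
    rw [List.range_succ, List.countP_append, ih, List.countP_singleton]
    by_cases h : m < D
    · rw [if_pos (by simpa using h)]; omega
    · rw [if_neg (by simpa using h)]; omega

lemma length_conj (l : List ℕ) : (conj l).length = l.headI := by simp [conj]

lemma getD_conj_zero {l : List ℕ} (hl : ∀ x ∈ l, 0 < x) : (conj l).getD 0 0 = l.length := by
  cases l with
  | nil => rfl
  | cons a l =>
    have ha := hl a List.mem_cons_self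
    rw [List.getD_eq_getElem _ _ (by simpa [length_conj] using ha)]
    simp only [conj, List.headI_cons, List.getElem_map, List.getElem_range]
    exact List.countP_eq_length.2 fun x hx => by simpa using hl x hx

lemma headI_conj {l : List ℕ} (hl : ∀ x ∈ l, 0 < x) : (conj l).headI = l.length := by
  rw [← getD_conj_zero hl]
  cases conj l <;> rfl

lemma conj_conj {l : List ℕ} (hl : IsPartition l) : conj (conj l) = l := by
  refine List.ext_getElem (by rw [length_conj, headI_conj hl.2]) fun c _ hc => ?_
  have hhead : l[c] ≤ l.headI := by
    cases l with
    | nil => simp at hc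
    | cons a l =>
      rcases Nat.eq_zero_or_pos c with rfl | hc0
      · exact le_rfl
      · exact List.pairwise_iff_getElem.1 hl.1 0 c (by simp) hc hc0
  simp only [conj, List.getElem_map, List.getElem_range, List.countP_map]
  rw [List.countP_congr (q := fun j => j < l[c])
      fun j _ => by simpa using lt_countP_le_iff hl.1 hc (j + 1),
    countP_range_lt, min_eq_left hhead]

lemma Hcols_eq_map_conj (mu : List ℕ) : Hcols mu = (conj mu).map fun L => List.range' 1 L := by
  conv_rhs => rw [conj, List.map_map]
  refine List.map_congr_left fun c hc => ?_
  rw [List.mem_range] at hc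
  rw [List.getD_eq_getElem _ _ (by rwa [length_conj])]
  simp [conj, List.range'_eq_map_range, Nat.add_comm]

lemma Hcols_conj {l : List ℕ} (hl : IsPartition l) :
    Hcols (conj l) = l.map fun L => List.range' 1 L := by
  rw [Hcols_eq_map_conj, conj_conj hl]

lemma isSuperstandard_map_range' (l : List ℕ) :
    IsSuperstandard (l.map fun L => List.range' 1 L) := by
  intro C hC
  obtain ⟨L, -, rfl⟩ := List.mem_map.1 hC
  rw [List.length_range']

lemma stdRunAntitone_map_range' {l : List ℕ} (hl : l.Pairwise (· ≥ ·)) :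
    StdRunAntitone (l.map fun L => List.range' 1 L) := by
  have : (l.map fun L => List.range' 1 L).map (stdRun 0) = l := by
    rw [List.map_map]
    conv_rhs => rw [← List.map_id l]
    exact List.map_congr_left fun L _ => by simpa using stdRun_range' 0 L
  unfold StdRunAntitone
  rw [this]
  exact hl.isChain

lemma getD_drev {n : ℕ} {delta : List ℕ} (h : delta.length ≤ n) {i : ℕ} (hi : i < n) :
    (drev n delta).getD i 0 = delta.getD (n - 1 - i) 0 := by
  have hlen : (delta ++ List.replicate (n - delta.length) 0).length = n := by simp; omega
  rw [drev, List.getD_reverse _ (by omega), hlen]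
  by_cases hd : n - 1 - i < delta.length
  · exact List.getD_append _ _ _ _ hd
  · rw [List.getD_append_right _ _ _ _ (by omega), List.getD_replicate _ (by omega),
      List.getD_eq_default _ _ (by omega)]

end Partitions

section ColumnWord

def column (sh mu : List ℕ) (T : List (List ℕ)) (c : ℕ) : List ℕ :=
  (List.range T.length).filterMap fun i =>
    if mu.getD i 0 ≤ c ∧ c < sh.getD i 0 then some (entry mu T i c) else none

variable {sh mu : List ℕ} {T : List (List ℕ)}

lemma colWord_eq (sh mu : List ℕ) (T : List (List ℕ)) :
    colWord sh mu T = ((List.range sh.headI).reverse.map (column sh mu T)).flatten := rfl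

lemma column_eq_cons (hT : T ≠ []) {c : ℕ} (hc : mu.getD 0 0 ≤ c ∧ c < sh.getD 0 0) :
    ∃ t, column sh mu T c = entry mu T 0 c :: t := by
  obtain ⟨m, hm⟩ := Nat.exists_eq_add_one_of_ne_zero (List.length_pos_iff.2 hT).ne'
  unfold column
  rw [hm, List.range_succ_eq_map, List.filterMap_cons, if_pos hc]
  exact ⟨_, rfl⟩

lemma pos_of_mem_colWord (hT : IsSkewSSYT sh mu T) {z : ℕ} (hz : z ∈ colWord sh mu T) :
    0 < z := by
  obtain ⟨-, hlen, hpos, -, -⟩ := hT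
  obtain ⟨l, hl, hzcol⟩ := List.mem_flatten.1 hz
  obtain ⟨c, -, rfl⟩ := List.mem_map.1 hl
  obtain ⟨i, hi, hz⟩ := List.mem_filterMap.1 hzcol
  rw [List.mem_range] at hi
  split at hz
  · obtain rfl := Option.some.inj hz
    have hrow : T.getD i [] ∈ T := by
      rw [List.getD_eq_getElem _ _ hi]
      exact List.getElem_mem hi
    unfold entry
    rw [List.getD_eq_getElem _ _ (by rw [hlen i]; omega)]
    exact hpos _ hrow _ (List.getElem_mem _)
  · simp at hz

end ColumnWord

section FirstRow

variable {lam mu delta : List ℕ} {S : List (List ℕ)}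

lemma firstRow_mem_length (hmu : ∀ x ∈ mu, 0 < x) (hS : IsSkewSSYT (conj mu) [] S)
    (hp : 0 < mu.length) : S ≠ [] ∧ S.getD 0 [] ∈ S ∧ (S.getD 0 []).length = mu.length := by
  obtain ⟨hSlen, hrowlen, -⟩ := hS
  have hp0 := getD_conj_zero hmu
  have hSne : S ≠ [] := by
    rintro rfl
    rw [List.length_nil, eq_comm, List.length_eq_zero_iff] at hSlen
    rw [hSlen] at hp0
    simp at hp0
    omega
  refine ⟨hSne, ?_, by rw [hrowlen 0, hp0]; rfl⟩
  rw [List.getD_eq_getElem _ _ (List.length_pos_iff.2 hSne)]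
  exact List.getElem_mem _

lemma colWord_conj_eq_append (hmu : ∀ x ∈ mu, 0 < x) {i : ℕ} (hi : i < mu.length) :
    ∃ u, colWord (conj mu) [] S =
      u ++ ((List.range (i + 1)).reverse.map (column (conj mu) [] S)).flatten := by
  rw [colWord_eq, headI_conj hmu, show mu.length = (i + 1) + (mu.length - (i + 1)) by omega,
    List.range_add, List.reverse_append, List.map_append, List.flatten_append]
  exact ⟨_, rfl⟩

lemma column_conj_ne_nil_and_headI (hmu : ∀ x ∈ mu, 0 < x) (hS : IsSkewSSYT (conj mu) [] S)
    {c : ℕ} (hc : c < mu.length) :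
    column (conj mu) [] S c ≠ [] ∧ (column (conj mu) [] S c).headI = (S.getD 0 []).getD c 0 := by
  obtain ⟨hSne, -, -⟩ := firstRow_mem_length hmu hS (by omega)
  obtain ⟨t, ht⟩ := column_eq_cons (sh := conj mu) (mu := []) hSne
    ⟨Nat.zero_le c, by rw [getD_conj_zero hmu]; exact hc⟩
  rw [ht]
  exact ⟨List.cons_ne_nil _ _, rfl⟩

lemma firstRow_getD_mono (hmu : ∀ x ∈ mu, 0 < x) (hS : IsSkewSSYT (conj mu) [] S) {c c' : ℕ}
    (hcc : c ≤ c') (hc' : c' < mu.length) : (S.getD 0 []).getD c 0 ≤ (S.getD 0 []).getD c' 0 := by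
  obtain ⟨-, hrow, hlen⟩ := firstRow_mem_length hmu hS (by omega)
  rw [List.getD_eq_getElem (S.getD 0 []) 0 (by omega : c < _),
    List.getD_eq_getElem (S.getD 0 []) 0 (by omega : c' < _)]
  rcases hcc.lt_or_eq with h | rfl
  · exact List.pairwise_iff_getElem.1 (hS.2.2.2.1 _ hrow) c c' _ _ h
  · exact le_rfl

lemma countP_add_le_length (hlam : IsPartition lam) (hmu : ∀ x ∈ mu, 0 < x)
    (hdelta : IsPartition delta) (hS : IsCompanion lam delta mu S) {i : ℕ} (hi : i < mu.length) :
    delta.countP (fun d => (S.getD 0 []).getD i 0 ≤ d) + (i + 1) ≤ lam.length := by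
  obtain ⟨hSS, hins⟩ := hS
  set s := (S.getD 0 []).getD i 0
  have hpos := fun z hz => pos_of_mem_colWord hSS (z := z) hz
  have hhead := fun c (hc : c ≤ i) => column_conj_ne_nil_and_headI hmu hSS (c := c) (by omega)
  obtain ⟨u, hu⟩ := colWord_conj_eq_append (S := S) hmu hi
  set bs := (List.range (i + 1)).reverse.map (column (conj mu) [] S)
  rw [hu] at hpos hins
  have hT0 : IsSuperstandard (Hcols (conj delta)) := by
    rw [Hcols_conj hdelta]; exact isSuperstandard_map_range' _
  obtain ⟨hUs, hUc⟩ := insertWord_invariants (fun z hz => hpos z (List.mem_append_left _ hz))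
    hT0.isStrictColumns (by rw [Hcols_conj hdelta]; exact stdRunAntitone_map_range' hdelta.1)
  rw [insertWord_append, Hcols_conj hlam] at hins
  have key := numColsGe_add_length_le (x := s) bs hUs hUc
    (fun z hz => hpos z (List.mem_append_right _ hz)) (hins ▸ isSuperstandard_map_range' lam)
    (by
      simp only [bs, List.mem_map, List.mem_reverse, List.mem_range]
      rintro _ ⟨c, hc, rfl⟩
      exact (hhead c (by omega)).1)
    (by
      simp only [bs, List.pairwise_map, List.pairwise_reverse]
      refine List.pairwise_lt_range.imp_of_mem fun {c c'} _ hc' hcc => ?_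
      rw [List.mem_range] at hc'
      rw [(hhead c (by omega)).2, (hhead c' (by omega)).2]
      exact firstRow_getD_mono hmu hSS hcc.le (by omega))
    (by
      simp only [bs, List.mem_map, List.mem_reverse, List.mem_range]
      rintro _ ⟨c, hc, rfl⟩
      rw [(hhead c (by omega)).2]
      exact firstRow_getD_mono hmu hSS (by omega) hi)
  have hT0U := numColsGe_le_insertWord (T := Hcols (conj delta)) (u := s) u
  have hcount : numColsGe (Hcols (conj delta)) s = delta.countP fun d => s ≤ d := by
    rw [Hcols_conj hdelta, numColsGe, List.countP_map]
    simp only [Function.comp_def, List.length_range']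
  rw [hins, List.length_map] at key
  simp only [List.length_map, List.length_reverse, List.length_range] at key
  omega

lemma drev_lt_firstRow {n : ℕ} (hlam : IsPartition lam) (hlamlen : lam.length ≤ n)
    (hmu : ∀ x ∈ mu, 0 < x) (hdelta : IsPartition delta)
    (hdlen : delta.length ≤ n) (hS : IsCompanion lam delta mu S) {i : ℕ} (hi : i < mu.length) :
    (drev n delta).getD i 0 < (S.getD 0 []).getD i 0 := by
  have hcount := countP_add_le_length hlam hmu hdelta hS hi
  obtain ⟨-, hrow, hlen⟩ := firstRow_mem_length hmu hS.1 (by omega)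
  have hs : 0 < (S.getD 0 []).getD i 0 := by
    rw [List.getD_eq_getElem _ _ (by omega)]
    exact hS.1.2.2.1 _ hrow _ (List.getElem_mem _)
  rw [getD_drev hdlen (by omega)]
  by_contra h
  rw [not_lt] at h
  have hd : n - 1 - i < delta.length := by
    by_contra hd
    rw [List.getD_eq_default delta 0 (not_lt.1 hd)] at h
    omega
  rw [List.getD_eq_getElem _ _ hd] at h
  have := (lt_countP_le_iff hdelta.1 hd _).2 h
  omega

end FirstRow

section MSequence

variable {n : ℕ} {mu delta : List ℕ} {S : List (List ℕ)}

lemma mChosen_succ (h : 2 * mu.length ≤ n) (j : ℕ) :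
    mChosen n mu delta S (j + 1) =
      Nat.findGreatest (fun k => mu.length - j ≤ k ∧ k ∉ mChosen n mu delta S j ∧
          (drev n delta).getD (k - 1) 0 < (S.getD 0 []).getD (mu.length - j - 1) 0)
        (2 * (mu.length - j) - 1) :: mChosen n mu delta S j := by
  rw [mChosen, if_pos (by omega)]

lemma lt_of_mem_mChosen (h : 2 * mu.length ≤ n)
    (hrow : ∀ i < mu.length, (drev n delta).getD i 0 < (S.getD 0 []).getD i 0) :
    ∀ j ≤ mu.length, ∀ m ∈ mChosen n mu delta S j, mu.length - j < m := by
  intro j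
  induction j with
  | zero => simp [mChosen]
  | succ j ih =>
    intro hj m hm
    rw [mChosen_succ h] at hm
    rcases List.mem_cons.1 hm with rfl | hm
    · refine Nat.lt_of_lt_of_le (by omega) (Nat.le_findGreatest (m := mu.length - j) (by omega)
        ⟨le_rfl, fun hmem => ?_, ?_⟩)
      · exact absurd (ih (by omega) _ hmem) (lt_irrefl _)
      · exact hrow _ (by omega)
    · exact Nat.lt_of_le_of_lt (by omega) (ih (by omega) m hm)

end MSequence

theorem m_sequence_well_defined_general
    (n : ℕ) (lam mu delta : List ℕ)
    (hlam : IsPartition lam) (hlamlen : lam.length ≤ n)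
    (hmu : IsPartition mu) (hpos : 2 * mu.length ≤ n)
    (hdelta : IsPartition delta) (hdlen : delta.length ≤ n)
    (S : List (List ℕ)) (hS : IsCompanion lam delta mu S) :
    (∀ i, 1 ≤ i → i ≤ mu.length →
      (drev n delta).getD (i - 1) 0 < (S.getD 0 []).getD (i - 1) 0) ∧
    (∀ i, 1 ≤ i → i ≤ mu.length →
      i ≤ mOv n mu delta S i ∧ mOv n mu delta S i ≤ 2 * i - 1) := by
  have hrow : ∀ i < mu.length, (drev n delta).getD i 0 < (S.getD 0 []).getD i 0 :=
    fun i hi => drev_lt_firstRow hlam hlamlen hmu.2 hdelta hdlen hS hi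
  refine ⟨fun i _ hip => hrow (i - 1) (by omega), fun i hi hip => ?_⟩
  have hsucc := mChosen_succ (delta := delta) (S := S) hpos (mu.length - i)
  have hm : mOv n mu delta S i = (mChosen n mu delta S (mu.length - i + 1)).headI := by
    rw [mOv, show mu.length + 1 - i = mu.length - i + 1 by omega]
  rw [hsucc, List.headI_cons] at hm
  have hmem : mOv n mu delta S i ∈ mChosen n mu delta S (mu.length - i + 1) := by
    rw [hsucc, hm]
    exact List.mem_cons_self
  have hlow := lt_of_mem_mChosen hpos hrow _ (by omega) _ hmem
  exact ⟨by omega, hm ▸ (Nat.findGreatest_le _).trans (by omega)⟩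

/-- **Remark 4.2.** Let `S` be a companion LR tableau in
`LR^{λ'}_{δ'μ'}` with first-row entries `s_1 ≤ ⋯ ≤ s_p` (`p = μ'_1`), where
`λ ∈ 𝒫_n`, `δ ∈ 𝒫^{(2)}_n` and `n - 2μ'_1 ≥ 0`.  Then `δ^{rev}_i < s_i` for
all `1 ≤ i ≤ p`; consequently the sequence `m_1 < ⋯ < m_p` of Definition 4.1
is well defined and satisfies `i ≤ m_i ≤ 2i - 1`. -/
theorem m_sequence_well_defined
    (n : ℕ) (lam mu delta : List ℕ)
    (hlam : IsPartition lam) (hlamlen : lam.length ≤ n)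
    (hmu : IsPartition mu) (hpos : 2 * mu.length ≤ n)
    (hdelta : IsPartition delta) (hdlen : delta.length ≤ n)
    (heven : ∀ x ∈ delta, 2 ∣ x)
    (S : List (List ℕ)) (hS : IsCompanion lam delta mu S) :
    (∀ i, 1 ≤ i → i ≤ mu.length →
      (drev n delta).getD (i - 1) 0 < (S.getD 0 []).getD (i - 1) 0) ∧
    (∀ i, 1 ≤ i → i ≤ mu.length →
      i ≤ mOv n mu delta S i ∧ mOv n mu delta S i ≤ 2 * i - 1) :=
  m_sequence_well_defined_general n lam mu delta hlam hlamlen hmu hpos hdelta hdlen S hS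

end LRPaper
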